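/- If z₀ ∈ ℂ ∖ ((−∞, ρ̂] ∪ [ρ, ∞)) satisfies ψ(z₀) = q, then z₀ is real with z₀ ∈ [ρ̂, 0) ∪ (0, ρ], and the discriminant d is strictly positive (so in particular ζ ≠ ζ̂ and both are real). -/

import Mathlib

/-!
Squaring `ψ(z₀) = q` gives `p(z₀) = (1 - qκ + κμz₀)²` together with
`Re (1 - qκ + κμz₀) ≥ 0`, since the principal square root has nonnegative real part.
Completing the square turns the first equation into `c² = d` for
`c = (σ² + κμ²) z₀ + θ + μ(1 - qκ)`. If `Re c = 0`, the sign condition says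
`σ²(1 - qκ) - κμθ ≥ 0`, hence `d = (θ + μ)² + 2q(σ²(1 - qκ) - κμθ) + κq²σ² > 0`,
contradicting `d = c² = -(Im c)²`. So `Re c ≠ 0`, which makes `c` real, hence `z₀` real and
`d = c² > 0`. Finally `z₀ = 0` would force `(1 - qκ)² = 1` with `1 - qκ ≥ 0`, i.e. `qκ = 0`.
-/

namespace Complex

lemma re_cpow_one_half_nonneg (u : ℂ) : 0 ≤ (u ^ (1 / 2 : ℂ)).re := by
  rw [one_div, cpow_inv_two_re]
  exact Real.sqrt_nonneg _

lemma cpow_one_half_sq (u : ℂ) : (u ^ (1 / 2 : ℂ)) ^ 2 = u := by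
  rw [one_div, cpow_ofNat_inv_pow]

lemma ofReal_cpow_one_half {x : ℝ} (hx : 0 ≤ x) : (x : ℂ) ^ (1 / 2 : ℂ) = (√x : ℂ) := by
  rw [Real.sqrt_eq_rpow, ofReal_cpow hx]
  norm_num

lemma nonpos_of_sq_eq_ofReal_of_re_eq_zero {c : ℂ} {r : ℝ} (h : c ^ 2 = r) (hre : c.re = 0) :
    r ≤ 0 := by
  have hr := congrArg re h
  simp only [sq, mul_re, hre, ofReal_re] at hr
  nlinarith

lemma im_eq_zero_and_pos_of_sq_eq_ofReal {c : ℂ} {r : ℝ} (h : c ^ 2 = r) (hre : c.re ≠ 0) :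
    c.im = 0 ∧ 0 < r := by
  have hr := congrArg re h
  have hi := congrArg im h
  simp only [sq, mul_re, mul_im, ofReal_re, ofReal_im] at hr hi
  have him : c.im = 0 := by
    have : 2 * c.re * c.im = 0 := by linarith
    simpa [hre] using this
  refine ⟨him, ?_⟩
  rw [← hr, him]
  nlinarith [sq_pos_of_ne_zero hre]

end Complex

section NIG

variable {κ σ q θ μ : ℝ}

def nigDiscriminant (κ σ q θ μ : ℝ) : ℝ :=
  θ ^ 2 + μ ^ 2 - 2 * θ * μ * (q * κ - 1) + q * σ ^ 2 * (2 - q * κ)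

lemma nigDiscriminant_eq : nigDiscriminant κ σ q θ μ =
    (θ + μ) ^ 2 + 2 * q * (σ ^ 2 * (1 - q * κ) - κ * μ * θ) + κ * q ^ 2 * σ ^ 2 := by
  unfold nigDiscriminant
  ring

lemma nigDiscriminant_pos (hκ : 0 < κ) (hσ : σ ≠ 0) (hq : 0 < q)
    (hE : 0 ≤ σ ^ 2 * (1 - q * κ) - κ * μ * θ) : 0 < nigDiscriminant κ σ q θ μ := by
  rw [nigDiscriminant_eq]
  positivity

lemma nig_sq_eq_discriminant (hκ : κ ≠ 0) {z : ℂ}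
    (h : 1 - 2 * κ * θ * z - κ * σ ^ 2 * z ^ 2 = (1 - q * κ + κ * μ * z) ^ 2) :
    (((σ ^ 2 + κ * μ ^ 2 : ℝ) : ℂ) * z + ((θ + μ * (1 - q * κ) : ℝ) : ℂ)) ^ 2 =
      (nigDiscriminant κ σ q θ μ : ℂ) := by
  apply mul_left_cancel₀ (Complex.ofReal_ne_zero.2 hκ)
  unfold nigDiscriminant
  push_cast
  linear_combination (-(σ : ℂ) ^ 2 - κ * μ ^ 2) * h

lemma nig_root_im_eq_zero_and_discriminant_pos (hκ : 0 < κ) (hσ : σ ≠ 0) (hq : 0 < q) {z : ℂ}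
    (h : 1 - 2 * κ * θ * z - κ * σ ^ 2 * z ^ 2 = (1 - q * κ + κ * μ * z) ^ 2)
    (hre : 0 ≤ (1 - q * κ + κ * μ * z : ℂ).re) :
    z.im = 0 ∧ 0 < nigDiscriminant κ σ q θ μ := by
  set S := σ ^ 2 + κ * μ ^ 2
  have hS : 0 < S := by positivity
  set c : ℂ := (S : ℂ) * z + ((θ + μ * (1 - q * κ) : ℝ) : ℂ)
  have hc : c ^ 2 = nigDiscriminant κ σ q θ μ := nig_sq_eq_discriminant hκ.ne' h
  have hcre : c.re = S * z.re + (θ + μ * (1 - q * κ)) := by simp [c]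
  have hcim : c.im = S * z.im := by simp [c]
  have hc0 : c.re ≠ 0 := by
    intro h0
    have hE : 0 ≤ σ ^ 2 * (1 - q * κ) - κ * μ * θ := by
      have hSa : S * (1 - q * κ + κ * μ * z : ℂ).re =
          σ ^ 2 * (1 - q * κ) - κ * μ * θ + κ * μ * c.re := by
        rw [hcre]
        simp only [Complex.add_re, Complex.sub_re, Complex.one_re, Complex.mul_re,
          Complex.ofReal_re, Complex.ofReal_im, mul_zero, sub_zero, Complex.mul_im, zero_mul,
          add_zero, S]
        ring
      rw [h0, mul_zero, add_zero] at hSa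
      exact hSa ▸ mul_nonneg hS.le hre
    exact (nigDiscriminant_pos hκ hσ hq hE).not_ge
      (Complex.nonpos_of_sq_eq_ofReal_of_re_eq_zero hc h0)
  obtain ⟨him, hd⟩ := Complex.im_eq_zero_and_pos_of_sq_eq_ofReal hc hc0
  rw [hcim] at him
  exact ⟨(mul_eq_zero.1 him).resolve_left hS.ne', hd⟩

lemma nig_root_ne_zero (hκ : 0 < κ) (hq : 0 < q) {z : ℂ}
    (h : 1 - 2 * κ * θ * z - κ * σ ^ 2 * z ^ 2 = (1 - q * κ + κ * μ * z) ^ 2)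
    (hre : 0 ≤ (1 - q * κ + κ * μ * z : ℂ).re) : z ≠ 0 := by
  rintro rfl
  have h1 : (1 : ℝ) = (1 - q * κ) ^ 2 := by
    exact_mod_cast (by simpa using h : (1 : ℂ) = (1 - q * κ) ^ 2)
  simp at hre
  nlinarith [mul_pos hq hκ]

end NIG
theorem nig_solution_real_and_discriminant_pos_general
    (κ σ q θ μ ρ ρhat d : ℝ) (ζ ζhat : ℂ)
    (hκ : 0 < κ) (hσ : 0 < σ) (hq : 0 < q)
    (hd : d = θ ^ 2 + μ ^ 2 - 2 * θ * μ * (q * κ - 1) + q * σ ^ 2 * (2 - q * κ))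
    (hζ : ζ = (((-θ - μ + κ * μ * q : ℝ) : ℂ) + (d : ℂ) ^ (1 / 2 : ℂ)) /
      (((κ * μ ^ 2 + σ ^ 2 : ℝ)) : ℂ))
    (hζhat : ζhat = (((-θ - μ + κ * μ * q : ℝ) : ℂ) - (d : ℂ) ^ (1 / 2 : ℂ)) /
      (((κ * μ ^ 2 + σ ^ 2 : ℝ)) : ℂ))
    (ψ : ℂ → ℂ)
    (hψ : ∀ z : ℂ, ψ z =
      1 / (κ : ℂ) -
        (1 / (κ : ℂ)) *
          (1 - 2 * (κ : ℂ) * (θ : ℂ) * z - (κ : ℂ) * (σ : ℂ) ^ 2 * z ^ 2) ^ (1 / 2 : ℂ) +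
        (μ : ℂ) * z)
    (z₀ : ℂ) (hz₀ : z₀.im ≠ 0 ∨ (ρhat < z₀.re ∧ z₀.re < ρ))
    (hsol : ψ z₀ = (q : ℂ)) :
    z₀.im = 0 ∧
      ((ρhat ≤ z₀.re ∧ z₀.re < 0) ∨ (0 < z₀.re ∧ z₀.re ≤ ρ)) ∧
      0 < d ∧ ζ ≠ ζhat ∧ ζ.im = 0 ∧ ζhat.im = 0 := by
  have hsqrt : (1 - 2 * κ * θ * z₀ - κ * σ ^ 2 * z₀ ^ 2 : ℂ) ^ (1 / 2 : ℂ) =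
      1 - q * κ + κ * μ * z₀ := by
    rw [hψ] at hsol
    generalize (1 - 2 * κ * θ * z₀ - κ * σ ^ 2 * z₀ ^ 2 : ℂ) ^ (1 / 2 : ℂ) = w at hsol ⊢
    field_simp [Complex.ofReal_ne_zero.2 hκ.ne'] at hsol
    linear_combination -hsol
  have hroot := hsqrt ▸ Complex.cpow_one_half_sq (1 - 2 * κ * θ * z₀ - κ * σ ^ 2 * z₀ ^ 2)
  have hre := hsqrt ▸ Complex.re_cpow_one_half_nonneg (1 - 2 * κ * θ * z₀ - κ * σ ^ 2 * z₀ ^ 2)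
  obtain ⟨him, hdpos⟩ := nig_root_im_eq_zero_and_discriminant_pos hκ hσ.ne' hq hroot.symm hre
  replace hdpos : 0 < d := by rw [hd]; exact hdpos
  have hx₀ : z₀.re ≠ 0 := fun h ↦ nig_root_ne_zero hκ hq hroot.symm hre (Complex.ext h him)
  obtain ⟨hlo, hhi⟩ := hz₀.resolve_left (not_not_intro him)
  have hS : (κ * μ ^ 2 + σ ^ 2 : ℂ) ≠ 0 := by exact_mod_cast (by positivity : κ * μ ^ 2 + σ ^ 2 ≠ 0)
  have hsd : (√d : ℂ) ≠ 0 := by exact_mod_cast (Real.sqrt_pos.2 hdpos).ne'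
  rw [Complex.ofReal_cpow_one_half hdpos.le] at hζ hζhat
  refine ⟨him, hx₀.lt_or_gt.imp (⟨hlo.le, ·⟩) (⟨·, hhi.le⟩), hdpos, ?_, ?_, ?_⟩
  · rw [hζ, hζhat]
    push_cast
    rw [Ne, div_left_inj' hS]
    intro h
    exact hsd (by linear_combination h / 2)
  · rw [hζ]; norm_cast
  · rw [hζhat]; norm_cast

/-- If z₀ in the cut plane satisfies ψ(z₀) = q, then z₀ is real with
z₀ ∈ [ρ̂, 0) ∪ (0, ρ], and the discriminant d is strictly positive (so ζ ≠ ζ̂ and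
both are real). -/
theorem nig_solution_real_and_discriminant_pos
    (κ σ q θ μ ρ ρhat d : ℝ) (ζ ζhat : ℂ)
    (hκ : 0 < κ) (hσ : 0 < σ) (hq : 0 < q)
    (hρ : ρ = (-θ + Real.sqrt (θ ^ 2 + σ ^ 2 / κ)) / σ ^ 2)
    (hρhat : ρhat = (-θ - Real.sqrt (θ ^ 2 + σ ^ 2 / κ)) / σ ^ 2)
    (hd : d = θ ^ 2 + μ ^ 2 - 2 * θ * μ * (q * κ - 1) + q * σ ^ 2 * (2 - q * κ))
    (hζ : ζ = (((-θ - μ + κ * μ * q : ℝ) : ℂ) + (d : ℂ) ^ (1 / 2 : ℂ)) /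
      (((κ * μ ^ 2 + σ ^ 2 : ℝ)) : ℂ))
    (hζhat : ζhat = (((-θ - μ + κ * μ * q : ℝ) : ℂ) - (d : ℂ) ^ (1 / 2 : ℂ)) /
      (((κ * μ ^ 2 + σ ^ 2 : ℝ)) : ℂ))
    (ψ : ℂ → ℂ)
    (hψ : ∀ z : ℂ, ψ z =
      1 / (κ : ℂ) -
        (1 / (κ : ℂ)) *
          (1 - 2 * (κ : ℂ) * (θ : ℂ) * z - (κ : ℂ) * (σ : ℂ) ^ 2 * z ^ 2) ^ (1 / 2 : ℂ) +
        (μ : ℂ) * z)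
    (z₀ : ℂ) (hz₀ : z₀.im ≠ 0 ∨ (ρhat < z₀.re ∧ z₀.re < ρ))
    (hsol : ψ z₀ = (q : ℂ)) :
    z₀.im = 0 ∧
      ((ρhat ≤ z₀.re ∧ z₀.re < 0) ∨ (0 < z₀.re ∧ z₀.re ≤ ρ)) ∧
      0 < d ∧ ζ ≠ ζhat ∧ ζ.im = 0 ∧ ζhat.im = 0 :=
  nig_solution_real_and_discriminant_pos_general κ σ q θ μ ρ ρhat d ζ ζhat hκ hσ hq hd hζ hζhat ψ hψ
    z₀ hz₀ hsol
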